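/- Let S : ℝ → ℝ be strictly monotone and continuous with D the S-derivative, and let a, b be real with a ≠ 0 and b² - 4ac = 0, so r = -b/(2a) is a double root of a·r² + b·r + c = 0. Then ψ(x) = S(x)·exp(-b·S(x)/(2a)) satisfies a·D²ψ + b·Dψ + c·ψ = 0 at every point. -/

import Mathlib

open Filter Topology Real

/-- The S-derivative (fractal F^α-derivative with staircase function S):
`f` has S-derivative `d` at `x` iff `(f y - f x)/(S y - S x) → d` as `y → x`, `y ≠ x`. -/
def HasSDerivAt (S f : ℝ → ℝ) (d x : ℝ) : Prop :=
  Tendsto (fun y => (f y - f x) / (S y - S x)) (𝓝[≠] x) (𝓝 d)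

/-! The double root `r = -b/(2a)` makes `u ↦ u e^{ru}` a solution of `a g'' + b g' + c g = 0`,
and the S-derivative of `g ∘ S` is `g' ∘ S` (difference quotients of `g ∘ S` at `x` are those of
`g` at `S x`, and `S` maps punctured neighbourhoods of `x` into punctured neighbourhoods of `S x`).
So `ψ = g ∘ S` solves the S-differential equation pointwise. -/

theorem HasDerivAt.hasSDerivAt_comp {S g : ℝ → ℝ} {d x : ℝ} (hg : HasDerivAt g d (S x))
    (hS : Function.Injective S) (hSc : ContinuousAt S x) :
    HasSDerivAt S (fun y => g (S y)) d x := by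
  have hpunct : Tendsto S (𝓝[≠] x) (𝓝[≠] (S x)) :=
    hSc.continuousWithinAt.tendsto_nhdsWithin fun _ hy => hS.ne hy
  simpa only [HasSDerivAt, Function.comp_def, slope_def_field] using
    (hasDerivAt_iff_tendsto_slope.mp hg).comp hpunct

theorem hasDerivAt_mul_exp_const_mul (r u : ℝ) :
    HasDerivAt (fun u => u * exp (r * u)) ((1 + r * u) * exp (r * u)) u := by
  refine ((hasDerivAt_id u).fun_mul ((hasDerivAt_id u).const_mul r).exp).congr_deriv ?_
  simp only [id_eq]
  ring

theorem hasDerivAt_one_add_mul_mul_exp_const_mul (r u : ℝ) :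
    HasDerivAt (fun u => (1 + r * u) * exp (r * u)) ((2 * r + r ^ 2 * u) * exp (r * u)) u := by
  refine ((((hasDerivAt_id u).const_mul r).const_add 1).fun_mul
    ((hasDerivAt_id u).const_mul r).exp).congr_deriv ?_
  simp only [id_eq]
  ring

theorem double_root_of_discrim_eq_zero {a b c : ℝ} (ha : a ≠ 0) (hdisc : b ^ 2 - 4 * a * c = 0) :
    2 * a * (-b / (2 * a)) + b = 0 ∧ a * (-b / (2 * a)) ^ 2 + b * (-b / (2 * a)) + c = 0 := by
  constructor
  · field_simp
    ring
  · field_simp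
    linear_combination -hdisc

theorem stmt_6 (S : ℝ → ℝ) (hS : StrictMono S) (hSc : Continuous S)
    (a b c : ℝ) (ha : a ≠ 0) (hdisc : b ^ 2 - 4 * a * c = 0) :
    ∃ ψ' ψ'' : ℝ → ℝ,
      (∀ x, HasSDerivAt S
        (fun y => S y * Real.exp (-b * S y / (2 * a))) (ψ' x) x) ∧
      (∀ x, HasSDerivAt S ψ' (ψ'' x) x) ∧
      (∀ x, a * ψ'' x + b * ψ' x +
        c * (S x * Real.exp (-b * S x / (2 * a))) = 0) := by
  set r := -b / (2 * a) with hr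
  have hexponent (u : ℝ) : -b * u / (2 * a) = r * u := by rw [hr]; ring
  obtain ⟨hlin, hquad⟩ := double_root_of_discrim_eq_zero ha hdisc
  simp only [hexponent]
  refine ⟨fun x => (1 + r * S x) * exp (r * S x), fun x => (2 * r + r ^ 2 * S x) * exp (r * S x),
    fun x => ?_, fun x => ?_, fun x => ?_⟩
  · exact (hasDerivAt_mul_exp_const_mul r (S x)).hasSDerivAt_comp hS.injective hSc.continuousAt
  · exact (hasDerivAt_one_add_mul_mul_exp_const_mul r (S x)).hasSDerivAt_comp hS.injective
      hSc.continuousAt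
  · linear_combination (exp (r * S x)) * (hlin + S x * hquad)
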